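/- arXiv:2410.16105 — 3 statements merged into one kernel-verified Lean document; each statement's English description precedes it below -/
import Mathlib

section
/- Let H be a real inner product space, let e ∈ H, and let S ⊆ H be a set that is closed under real scalar multiplication. If g* ∈ S attains the minimum of g ↦ ‖e − g‖ over S, then ‖e − g*‖² = ‖e‖² − ‖g*‖². -/
/-!
The multiples of `g*` form a line inside `S`, and `g*` is the best approximation of `e` on that
line, so the residual `e - g*` is orthogonal to `g*`. Pythagoras applied to `e = (e - g*) + g*`
gives the identity.
-/

theorem Submodule.real_inner_sub_eq_zero_of_forall_norm_sub_le
    {F : Type*} [NormedAddCommGroup F] [InnerProductSpace ℝ F] {K : Submodule ℝ F} {u v : F}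
    (hv : v ∈ K) (hmin : ∀ w ∈ K, ‖u - v‖ ≤ ‖u - w‖) {w : F} (hw : w ∈ K) :
    inner ℝ (u - v) w = 0 := by
  have hinf : ‖u - v‖ = ⨅ w : (K : Set F), ‖u - w‖ :=
    le_antisymm (le_ciInf fun w ↦ hmin w w.2)
      (ciInf_le ⟨0, Set.forall_mem_range.2 fun _ ↦ norm_nonneg _⟩ (⟨v, hv⟩ : (K : Set F)))
  exact (K.norm_eq_iInf_iff_real_inner_eq_zero hv).1 hinf w hw

/-- If `g*` minimizes `‖e - g‖` over a set `S` closed under real scalar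
multiplication, then `‖e - g*‖² = ‖e‖² - ‖g*‖²`. -/
theorem minimizer_residual_norm_sq
    {H : Type*} [NormedAddCommGroup H] [InnerProductSpace ℝ H]
    (e : H) (S : Set H) (hS : ∀ g ∈ S, ∀ t : ℝ, t • g ∈ S)
    (gstar : H) (hgstar : gstar ∈ S)
    (hmin : ∀ g ∈ S, ‖e - gstar‖ ≤ ‖e - g‖) :
    ‖e - gstar‖ ^ 2 = ‖e‖ ^ 2 - ‖gstar‖ ^ 2 := by
  have hline : ∀ w ∈ ℝ ∙ gstar, ‖e - gstar‖ ≤ ‖e - w‖ := by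
    intro w hw
    obtain ⟨t, rfl⟩ := Submodule.mem_span_singleton.1 hw
    exact hmin _ (hS gstar hgstar t)
  have horth : inner ℝ (e - gstar) gstar = 0 :=
    Submodule.real_inner_sub_eq_zero_of_forall_norm_sub_le (Submodule.mem_span_singleton_self gstar)
      hline (Submodule.mem_span_singleton_self gstar)
  have hpyth := norm_add_sq_eq_norm_sq_add_norm_sq_real horth
  rw [sub_add_cancel] at hpyth
  linarith
end

section
/- Let H be a real inner product space, let e ∈ H, and let S ⊆ H be a set that is closed under real scalar multiplication. If g* ∈ S attains the minimum of g ↦ ‖e − g‖ over S, then either g* = 0 or ‖e − g*‖ < ‖e‖. -/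
/-! By the parallelogram law applied to `e - g/2 ± g/2`,
`‖e‖² + ‖e - g‖² = 2‖e - g/2‖² + ‖g‖²/2`. A minimizer `g` over a scaling-closed set beats
its own half `g/2`, so `‖g‖²/2 ≤ ‖e‖² - ‖e - g‖²`, which is positive unless `g = 0`. -/

theorem norm_sq_div_two_le_of_norm_sub_le_norm_sub_half_smul
    {𝕜 H : Type*} [RCLike 𝕜] [NormedAddCommGroup H] [InnerProductSpace 𝕜 H] {e g : H}
    (h : ‖e - g‖ ≤ ‖e - (2⁻¹ : 𝕜) • g‖) :
    ‖g‖ ^ 2 / 2 ≤ ‖e‖ ^ 2 - ‖e - g‖ ^ 2 := by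
  have hpar := parallelogram_law_with_norm 𝕜 (e - (2⁻¹ : 𝕜) • g) ((2⁻¹ : 𝕜) • g)
  have hhalf : ‖(2⁻¹ : 𝕜) • g‖ = ‖g‖ / 2 := by
    rw [norm_smul, norm_inv, RCLike.norm_two, inv_mul_eq_div]
  have hsub : e - (2⁻¹ : 𝕜) • g - (2⁻¹ : 𝕜) • g = e - g := by
    rw [sub_sub, ← add_smul, ← two_mul, mul_inv_cancel₀ two_ne_zero, one_smul]
  rw [sub_add_cancel, hsub, hhalf] at hpar
  linarith [pow_le_pow_left₀ (norm_nonneg _) h 2]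

/-- If `g*` minimizes `‖e - g‖` over a set `S` closed under real scalar
multiplication, then either `g* = 0` or the residual norm strictly decreases. -/
theorem minimizer_zero_or_strict_decrease
    {H : Type*} [NormedAddCommGroup H] [InnerProductSpace ℝ H]
    (e : H) (S : Set H) (hS : ∀ g ∈ S, ∀ t : ℝ, t • g ∈ S)
    (gstar : H) (hgstar : gstar ∈ S)
    (hmin : ∀ g ∈ S, ‖e - gstar‖ ≤ ‖e - g‖) :
    gstar = 0 ∨ ‖e - gstar‖ < ‖e‖ := by
  refine or_iff_not_imp_left.mpr fun hne => ?_
  have hgap := norm_sq_div_two_le_of_norm_sub_le_norm_sub_half_smul (hmin _ (hS gstar hgstar 2⁻¹))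
  have hpos : 0 < ‖gstar‖ := norm_pos_iff.mpr hne
  exact lt_of_pow_lt_pow_left₀ 2 (norm_nonneg e) (by nlinarith)
end

section
/- For every a ∈ ℝ, the family of Bessel values indexed by n ∈ ℤ is absolutely summable: ∑_{n ∈ ℤ} |J_n(a)| < ∞, where J_n(a) := (1/(2π)) ∫_{-π}^{π} cos(a·sin θ − n·θ) dθ. -/
/-!
`J_n(a)` is the real part of the `n`-th Fourier coefficient of the smooth `2π`-periodic function
`θ ↦ exp (i a sin θ)`. Integrating by parts twice, the boundary terms vanish by periodicity, so the
Fourier coefficients of a `C²` periodic function are `O(1 / n²)`, hence absolutely summable.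
-/

/-- Bessel function of the first kind, via its integral representation. -/
noncomputable def besselJ (n : ℤ) (a : ℝ) : ℝ :=
  (1 / (2 * Real.pi)) * ∫ θ in (-Real.pi)..Real.pi, Real.cos (a * Real.sin θ - n * θ)

open Complex Function MeasureTheory Set
open scoped Real

theorem Function.Periodic.deriv {F : Type*} [NormedAddCommGroup F] [NormedSpace ℝ F]
    {f : ℝ → F} {c : ℝ} (hf : Periodic f c) : Periodic (deriv f) c := fun x => by
  rw [← deriv_comp_add_const, hf.funext]

section FourierCoeffOn

variable {a b : ℝ} (hab : a < b)

theorem norm_fourierCoeffOn_le {f : ℝ → ℂ} {C : ℝ} (hf : ∀ x ∈ Icc a b, ‖f x‖ ≤ C) (n : ℤ) :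
    ‖fourierCoeffOn hab f n‖ ≤ C := by
  have hba : 0 < b - a := sub_pos.2 hab
  have : Fact (0 < b - a) := ⟨hba⟩
  have hint : ‖∫ x in a..b, fourier (-n) (x : AddCircle (b - a)) • f x‖ ≤ C * |b - a| := by
    refine intervalIntegral.norm_integral_le_of_norm_le_const fun x hx => ?_
    rw [norm_smul, fourier_apply, Circle.norm_coe, one_mul]
    exact hf x (Ioc_subset_Icc_self (uIoc_of_le hab.le ▸ hx))
  rw [fourierCoeffOn_eq_integral, norm_smul, Real.norm_of_nonneg (by positivity),
    one_div_mul_eq_div, div_le_iff₀ hba]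
  rwa [abs_of_pos hba] at hint

theorem norm_fourierCoeffOn_eq_of_hasDerivAt {f f' : ℝ → ℂ} {n : ℤ} (hn : n ≠ 0)
    (hf : ∀ x ∈ uIcc a b, HasDerivAt f (f' x) x) (hf' : IntervalIntegrable f' volume a b)
    (hfab : f b = f a) :
    ‖fourierCoeffOn hab f n‖ = (b - a) / (2 * π * |(n : ℝ)|) * ‖fourierCoeffOn hab f' n‖ := by
  rw [fourierCoeffOn_of_hasDerivAt hab hn hf hf', hfab, sub_self, mul_zero, zero_sub, norm_mul,
    norm_neg, norm_mul, ← ofReal_sub, norm_real, Real.norm_of_nonneg (sub_pos.2 hab).le]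
  simp only [one_div, norm_inv, norm_mul, norm_neg, norm_ofNat, norm_real, norm_I, norm_intCast,
    Real.norm_of_nonneg Real.pi_pos.le]
  field_simp

theorem norm_fourierCoeffOn_le_of_contDiff {f : ℝ → ℂ} (hf : ContDiff ℝ 2 f)
    (hper : Periodic f (b - a)) {C : ℝ} (hC : ∀ x ∈ Icc a b, ‖deriv (deriv f) x‖ ≤ C)
    {n : ℤ} (hn : n ≠ 0) :
    ‖fourierCoeffOn hab f n‖ ≤ ((b - a) / (2 * π)) ^ 2 * C / (n : ℝ) ^ 2 := by
  have hf1 : ContDiff ℝ 1 (deriv f) := hf.iterate_deriv' 1 1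
  have hendpoints : ∀ g : ℝ → ℂ, Periodic g (b - a) → g b = g a := fun g hg => by
    simpa using hg a
  rw [norm_fourierCoeffOn_eq_of_hasDerivAt hab hn
      (fun x _ => (hf.differentiable two_ne_zero).differentiableAt.hasDerivAt)
      (hf1.continuous.intervalIntegrable _ _) (hendpoints f hper),
    norm_fourierCoeffOn_eq_of_hasDerivAt hab hn
      (fun x _ => (hf1.differentiable one_ne_zero).differentiableAt.hasDerivAt)
      ((hf1.continuous_deriv le_rfl).intervalIntegrable _ _) (hendpoints _ hper.deriv)]
  calc _ ≤ (b - a) / (2 * π * |(n : ℝ)|) * ((b - a) / (2 * π * |(n : ℝ)|) * C) := by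
        gcongr
        exact norm_fourierCoeffOn_le hab hC n
    _ = _ := by rw [← sq_abs (n : ℝ)]; ring

theorem summable_norm_fourierCoeffOn_of_contDiff {f : ℝ → ℂ} (hf : ContDiff ℝ 2 f)
    (hper : Periodic f (b - a)) : Summable fun n => ‖fourierCoeffOn hab f n‖ := by
  obtain ⟨C, hC⟩ := isCompact_Icc.exists_bound_of_continuousOn
    ((hf.iterate_deriv' 0 2).continuous.continuousOn (s := Icc a b))
  refine Summable.of_norm_bounded_eventually
    ((Real.summable_one_div_int_pow.mpr one_lt_two).mul_left (((b - a) / (2 * π)) ^ 2 * C)) ?_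
  filter_upwards [Filter.eventually_cofinite_ne 0] with n hn
  rw [norm_norm, mul_one_div]
  exact norm_fourierCoeffOn_le_of_contDiff hab hf hper hC hn

end FourierCoeffOn

theorem besselJ_eq_re_fourierCoeffOn (n : ℤ) (a : ℝ) :
    besselJ n a =
      (fourierCoeffOn (neg_lt_self Real.pi_pos) (fun θ => cexp (↑(a * Real.sin θ) * I)) n).re := by
  have hcont : Continuous fun x : ℝ =>
      fourier (-n) (x : AddCircle (π - -π)) • cexp (↑(a * Real.sin x) * I) := by
    fun_prop
  rw [fourierCoeffOn_eq_integral, real_smul, re_ofReal_mul, ← RCLike.re_eq_complex_re,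
    ← intervalIntegral.intervalIntegral_re (hcont.intervalIntegrable _ _), besselJ,
    sub_neg_eq_add, ← two_mul]
  congr 1
  refine intervalIntegral.integral_congr fun x _ => ?_
  have hexponent : 2 * ↑π * I * ↑(-n) * ↑x / ↑(2 * π) + ↑(a * Real.sin x) * I =
      ↑(a * Real.sin x - n * x) * I := by
    push_cast
    field_simp [Real.pi_ne_zero]
    ring
  rw [fourier_coe_apply, smul_eq_mul, ← Complex.exp_add, hexponent, RCLike.re_eq_complex_re,
    exp_ofReal_mul_I_re]

/-- The family `n ↦ J_n(a)` is absolutely summable over `ℤ`. -/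
theorem besselJ_abs_summable (a : ℝ) :
    Summable fun n : ℤ => |besselJ n a| := by
  have hsmooth : ContDiff ℝ 2 fun θ => cexp (↑(a * Real.sin θ) * I) :=
    ((ofRealCLM.contDiff.comp (contDiff_const.mul Real.contDiff_sin)).mul contDiff_const).cexp
  have hper : Periodic (fun θ => cexp (↑(a * Real.sin θ) * I)) (π - -π) := by
    rw [sub_neg_eq_add, ← two_mul]
    exact Real.sin_periodic.comp fun s => cexp (↑(a * s) * I)
  have hsum := summable_norm_fourierCoeffOn_of_contDiff (neg_lt_self Real.pi_pos) hsmooth hper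
  refine hsum.of_nonneg_of_le (fun n => abs_nonneg _) fun n => ?_
  rw [besselJ_eq_re_fourierCoeffOn]
  exact abs_re_le_norm _
end
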